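/- The polynomial sequence {B_n(y)}_{n≥0} of Bell polynomials is strongly y-log-convex: for all 1 ≤ m ≤ n, the polynomial B_{m-1}(y)·B_{n+1}(y) − B_m(y)·B_n(y) has nonnegative coefficients. -/

import Mathlib

/- Since `B (n+1) = y (B n + B n')`, the difference `B a B (n+1) - B (a+1) B n` equals
`B a · y B n' - y B a' · B n`, whose `i`-th coefficient is `∑_{k+l=i} (l-k) S(a,k) S(n,l)`.
Symmetrizing in `(k, l)` turns it into `½ ∑_{k+l=i} (l-k) (S(a,k) S(n,l) - S(a,l) S(n,k))`, and
every summand is nonnegative because the Stirling triangle is TP₂: for `a ≤ n` and `k ≤ l`,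
`S(a,l) S(n,k) ≤ S(a,k) S(n,l)`. This is proved by induction along the recurrence, together with
the strong log-concavity of each row, which follows from adjacent log-concavity since rows have
no internal zeros. -/

open Polynomial Finset

/-- The Stirling numbers of the second kind. -/
def S : ℕ → ℕ → ℕ
  | 0, 0 => 1
  | 0, _+1 => 0
  | _+1, 0 => 0
  | n+1, k+1 => S n k + (k + 1) * S n (k+1)

/-- The `n`-th Bell polynomial `B_n(y) = ∑_{k=0}^n S(n,k) y^k`. -/
noncomputable def B (n : ℕ) : Polynomial ℤ :=
  ∑ k ∈ Finset.range (n + 1), C (S n k : ℤ) * X ^ k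

/-- The two-row array with rows `f` and `g` is TP₂: its `2 × 2` minors `f k * g l - f l * g k`,
`k ≤ l`, are nonnegative. `TP2 (fun k => f (k + 1)) f` is strong log-concavity of `f`. -/
def TP2 {R : Type*} [Mul R] [LE R] (f g : ℕ → R) : Prop :=
  ∀ ⦃k l : ℕ⦄, k ≤ l → f l * g k ≤ f k * g l

lemma coeff_X_mul_derivative {R : Type*} [CommSemiring R] (p : R[X]) (k : ℕ) :
    (X * derivative p).coeff k = k * p.coeff k := by
  rcases k with _ | k
  · simp
  · rw [coeff_X_mul, coeff_derivative]
    push_cast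
    ring

lemma coeff_mul_X_derivative_sub {R : Type*} [CommRing R] (p q : R[X]) (i : ℕ) :
    (p * (X * derivative q) - X * derivative p * q).coeff i =
      ∑ x ∈ antidiagonal i, ((x.2 : R) - x.1) * (p.coeff x.1 * q.coeff x.2) := by
  rw [coeff_sub, coeff_mul, coeff_mul, ← sum_sub_distrib]
  simp only [coeff_X_mul_derivative]
  exact sum_congr rfl fun _ _ => by ring

lemma coeff_mul_X_derivative_sub_nonneg {R : Type*} [CommRing R] [LinearOrder R]
    [IsStrictOrderedRing R] {p q : R[X]} (h : TP2 p.coeff q.coeff) (i : ℕ) :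
    0 ≤ (p * (X * derivative q) - X * derivative p * q).coeff i := by
  set f : ℕ × ℕ → R := fun x => ((x.2 : R) - x.1) * (p.coeff x.1 * q.coeff x.2)
  have pair_nonneg : ∀ x : ℕ × ℕ, 0 ≤ f x + f x.swap := by
    rintro ⟨k, l⟩
    have hf : f (k, l) + f (l, k) =
        ((l : R) - k) * (p.coeff k * q.coeff l - p.coeff l * q.coeff k) := by
      simp only [f]
      ring
    rw [Prod.swap_prod_mk, hf]
    rcases le_total k l with hkl | hlk
    · exact mul_nonneg (sub_nonneg.2 (by exact_mod_cast hkl)) (sub_nonneg.2 (h hkl))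
    · refine mul_nonneg_of_nonpos_of_nonpos (sub_nonpos.2 (by exact_mod_cast hlk)) ?_
      linarith [h hlk]
  have : 0 ≤ 2 * ∑ x ∈ antidiagonal i, f x := by
    rw [two_mul]
    nth_rewrite 2 [← Nat.sum_antidiagonal_swap]
    rw [← sum_add_distrib]
    exact sum_nonneg fun x _ => pair_nonneg x
  rw [coeff_mul_X_derivative_sub]
  linarith

section Sequence

variable {f g : ℕ → ℕ}

lemma tp2_succ_self_of_adjacent (hadj : ∀ k, f (k + 2) * f k ≤ f (k + 1) * f (k + 1))
    (hzero : ∀ k, f (k + 1) = 0 → f (k + 2) = 0) : TP2 (fun k => f (k + 1)) f := by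
  intro k l hkl
  obtain ⟨d, rfl⟩ := Nat.exists_eq_add_of_le hkl
  induction d with
  | zero => exact le_rfl
  | succ d ih =>
    rcases Nat.eq_zero_or_pos (f (k + d + 1)) with hz | hpos
    · simp [← add_assoc, hzero _ hz]
    · refine Nat.le_of_mul_le_mul_right ?_ hpos
      calc f (k + (d + 1) + 1) * f k * f (k + d + 1)
          = f (k + d + 2) * (f (k + d + 1) * f k) := by ring_nf
        _ ≤ f (k + d + 2) * (f (k + 1) * f (k + d)) := Nat.mul_le_mul_left _ (ih (by omega))
        _ = f (k + 1) * (f (k + d + 2) * f (k + d)) := by ring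
        _ ≤ f (k + 1) * (f (k + d + 1) * f (k + d + 1)) := Nat.mul_le_mul_left _ (hadj _)
        _ = f (k + 1) * f (k + (d + 1)) * f (k + d + 1) := by ring_nf

lemma TP2.succ_left (hfg : TP2 f g) (hf : TP2 (fun k => f (k + 1)) f)
    (hzero : ∀ ⦃k l⦄, k ≤ l → f (k + 1) = 0 → f (l + 1) = 0) :
    TP2 (fun k => f (k + 1)) g := by
  intro k l hkl
  rcases hkl.eq_or_lt with rfl | hlt
  · exact le_rfl
  rcases Nat.eq_zero_or_pos (f (k + 1)) with hz | hpos
  · simp [hzero hkl hz]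
  refine Nat.le_of_mul_le_mul_right ?_ hpos
  calc f (l + 1) * g k * f (k + 1)
      = f (l + 1) * (f (k + 1) * g k) := by ring
    _ ≤ f (l + 1) * (f k * g (k + 1)) := Nat.mul_le_mul_left _ (hfg k.le_succ)
    _ = f (l + 1) * f k * g (k + 1) := by ring
    _ ≤ f (k + 1) * f l * g (k + 1) := Nat.mul_le_mul_right _ (hf hkl)
    _ = f (k + 1) * (f l * g (k + 1)) := by ring
    _ ≤ f (k + 1) * (f (k + 1) * g l) := Nat.mul_le_mul_left _ (hfg hlt)
    _ = f (k + 1) * g l * f (k + 1) := by ring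

end Sequence

lemma S_eq_zero_of_lt : ∀ {n k : ℕ}, n < k → S n k = 0
  | 0, 0, h => absurd h (by omega)
  | 0, _ + 1, _ => rfl
  | n + 1, 0, h => absurd h (by omega)
  | n + 1, k + 1, h => by
    rw [S, S_eq_zero_of_lt (by omega), S_eq_zero_of_lt (by omega), mul_zero, add_zero]

lemma S_self : ∀ n, S n n = 1
  | 0 => rfl
  | n + 1 => by rw [S, S_self n, S_eq_zero_of_lt n.lt_succ_self, mul_zero, add_zero]

lemma S_succ_pos : ∀ {n k : ℕ}, k < n → 0 < S n (k + 1)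
  | n + 1, k, h => by
    rw [S]
    rcases (Nat.lt_succ_iff.1 h).eq_or_lt with rfl | hlt
    · rw [S_self]
      omega
    · have := S_succ_pos hlt
      positivity

lemma S_succ_eq_zero_of_le {n k l : ℕ} (hkl : k ≤ l) (h : S n (k + 1) = 0) :
    S n (l + 1) = 0 := by
  refine S_eq_zero_of_lt ?_
  by_contra hle
  have := S_succ_pos (show k < n by omega)
  omega

lemma S_succ_adjacent_logConcave (a : ℕ) (h : TP2 (fun k => S a (k + 1)) (S a)) (k : ℕ) :
    S (a + 1) (k + 2) * S (a + 1) k ≤ S (a + 1) (k + 1) * S (a + 1) (k + 1) := by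
  rcases k with _ | j
  · simp [S]
  simp only [S]
  have h₁ := h (show j ≤ j + 1 by omega)
  have h₂ := Nat.mul_le_mul_left (j + 3) (h (show j ≤ j + 2 by omega))
  have h₃ := Nat.mul_le_mul_left ((j + 3) * (j + 1)) (h (show j + 1 ≤ j + 2 by omega))
  dsimp only at h₁ h₂ h₃
  -- The goal follows from `h₁ + h₂ + h₃` with `S(a, j+2)^2` to spare.
  nlinarith

lemma S_strongLogConcave : ∀ a, TP2 (fun k => S a (k + 1)) (S a)
  | 0 => fun k l _ => by simp [S]
  | a + 1 => tp2_succ_self_of_adjacent (S_succ_adjacent_logConcave a (S_strongLogConcave a))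
      fun k => S_succ_eq_zero_of_le k.le_succ

lemma TP2.S_succ_right {a b : ℕ} (h : TP2 (S a) (S b)) (hsucc : TP2 (fun k => S a (k + 1)) (S b)) :
    TP2 (S a) (S (b + 1)) := by
  rintro (_ | k) (_ | l) hkl
  · exact le_rfl
  · simp [S]
  · omega
  simp only [S]
  have h₁ := hsucc (show k ≤ l by omega)
  have h₂ := Nat.mul_le_mul (show k + 1 ≤ l + 1 by omega) (h hkl)
  dsimp only at h₁
  nlinarith

lemma S_tp2 {a b : ℕ} (hab : a ≤ b) : TP2 (S a) (S b) := by
  induction b, hab using Nat.le_induction with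
  | base => exact fun k l _ => (Nat.mul_comm _ _).le
  | succ b _ ih =>
    exact ih.S_succ_right (ih.succ_left (S_strongLogConcave a) fun _ _ => S_succ_eq_zero_of_le)

lemma coeff_B (n k : ℕ) : (B n).coeff k = S n k := by
  rw [B, finsetSum_coeff]
  simp only [coeff_C_mul, coeff_X_pow, mul_ite, mul_one, mul_zero, sum_ite_eq, mem_range]
  split_ifs with h
  · rfl
  · rw [S_eq_zero_of_lt (by omega), Nat.cast_zero]

lemma B_succ (n : ℕ) : B (n + 1) = X * (B n + derivative (B n)) := by
  ext (_ | k)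
  · simp [coeff_B, S]
  · rw [coeff_X_mul, coeff_add, coeff_derivative, coeff_B, coeff_B, coeff_B, S]
    push_cast
    ring

lemma tp2_coeff_B {a b : ℕ} (hab : a ≤ b) : TP2 (B a).coeff (B b).coeff := fun k l hkl => by
  simp only [coeff_B]
  exact_mod_cast S_tp2 hab hkl

/-- The Bell polynomials are strongly `y`-log-convex: for `1 ≤ m ≤ n`, the polynomial
`B_{m-1}(y)·B_{n+1}(y) − B_m(y)·B_n(y)` has nonnegative coefficients. -/
theorem bell_strongly_log_convex (m n : ℕ) (hm : 1 ≤ m) (hmn : m ≤ n) (i : ℕ) :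
    0 ≤ (B (m - 1) * B (n + 1) - B m * B n).coeff i := by
  obtain ⟨a, rfl⟩ : ∃ a, m = a + 1 := ⟨m - 1, by omega⟩
  have hwronskian : B a * B (n + 1) - B (a + 1) * B n =
      B a * (X * derivative (B n)) - X * derivative (B a) * B n := by
    rw [B_succ, B_succ]
    ring
  rw [Nat.add_sub_cancel, hwronskian]
  exact coeff_mul_X_derivative_sub_nonneg (tp2_coeff_B (by omega)) i
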